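/- Let D=(V,E) be a finite multidigraph, let u,v ∈ V be distinct vertices, and suppose the arc (u,v) occurs with multiplicity n and the arc (v,u) occurs with multiplicity m in E. Let D₃ be the multidigraph obtained from D by deleting all n arcs (u,v) and all m arcs (v,u), let D₁ = D₃ with one arc (u,v) added, and let D₂ = D₃ with one arc (v,u) added. Then σ(D;x) = n·σ(D₁;x) + m·σ(D₂;x) − (n+m−1)·σ(D₃;x) + n·m·x². -/

import Mathlib

open Classical

/-- A finite multidigraph: a finite set `V` of vertices (natural numbers),
a finite set `A` of arc identifiers, and a map `ends` assigning to each arc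
identifier its (source, target) pair of vertices.  Parallel arcs are distinct
identifiers with the same endpoints; loops are arcs with equal endpoints. -/
structure MDigraph where
  V : Finset ℕ
  A : Finset ℕ
  ends : ℕ → ℕ × ℕ

namespace MDigraph

/-- Every arc has both endpoints in the vertex set. -/
def WellFormed (D : MDigraph) : Prop :=
  ∀ a ∈ D.A, (D.ends a).1 ∈ D.V ∧ (D.ends a).2 ∈ D.V

/-- An arc is a loop if its source equals its target. -/
def IsLoop (D : MDigraph) (e : ℕ) : Prop := (D.ends e).1 = (D.ends e).2

/-- Arc deletion `D_{-e}`. -/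
def delArc (D : MDigraph) (e : ℕ) : MDigraph := ⟨D.V, D.A.erase e, D.ends⟩

/-- Arc contraction `D_{/e}`.  For a non-loop arc `e = (u,v)`: merge `u` and `v`
into a single vertex (named `u`), removing exactly the arcs of the form `(u,x)`
and `(y,v)`.  For a loop `e = (u,u)`: delete `u` together with all incident arcs. -/
noncomputable def contractArc (D : MDigraph) (e : ℕ) : MDigraph :=
  let u := (D.ends e).1
  let v := (D.ends e).2
  if u = v then
    ⟨D.V.erase u, D.A.filter (fun a => (D.ends a).1 ≠ u ∧ (D.ends a).2 ≠ u), D.ends⟩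
  else
    ⟨D.V.erase v, D.A.filter (fun a => (D.ends a).1 ≠ u ∧ (D.ends a).2 ≠ v),
      fun a => ((if (D.ends a).1 = v then u else (D.ends a).1),
                (if (D.ends a).2 = v then u else (D.ends a).2))⟩

/-- Arc extraction `D_{†e}`: delete both endpoints of `e` and all arcs incident to them. -/
noncomputable def extractArc (D : MDigraph) (e : ℕ) : MDigraph :=
  let u := (D.ends e).1
  let v := (D.ends e).2
  ⟨(D.V.erase u).erase v,
   D.A.filter (fun a =>
     (D.ends a).1 ≠ u ∧ (D.ends a).1 ≠ v ∧ (D.ends a).2 ≠ u ∧ (D.ends a).2 ≠ v),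
   D.ends⟩

/-- Add one new arc with endpoints `p` (using a fresh arc identifier). -/
noncomputable def addArc (D : MDigraph) (p : ℕ × ℕ) : MDigraph :=
  ⟨D.V, insert (D.A.sup id + 1) D.A, Function.update D.ends (D.A.sup id + 1) p⟩

/-- Vertex deletion `D_{-v}`. -/
noncomputable def delVertex (D : MDigraph) (v : ℕ) : MDigraph :=
  ⟨D.V.erase v, D.A.filter (fun a => (D.ends a).1 ≠ v ∧ (D.ends a).2 ≠ v), D.ends⟩

/-- Vertex contraction `D_{/v}`: delete `v`, and for every arc `(u,v)` into `v`
and every arc `(v,w)` out of `v` add a new arc `(u,w)`; thus the multiplicity of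
a new arc `(u,w)` is the multiplicity of `(u,v)` times that of `(v,w)`. -/
noncomputable def contractVertex (D : MDigraph) (v : ℕ) : MDigraph :=
  ⟨D.V.erase v,
   ((D.A.filter (fun a => (D.ends a).1 ≠ v ∧ (D.ends a).2 ≠ v)).image (fun a => 2 * a)) ∪
     (((D.A.filter (fun a => (D.ends a).2 = v)) ×ˢ (D.A.filter (fun a => (D.ends a).1 = v))).image
       (fun p => 2 * Nat.pair p.1 p.2 + 1)),
   fun n =>
     if n % 2 = 0 then D.ends (n / 2)
     else ((D.ends (Nat.unpair ((n - 1) / 2)).1).1, (D.ends (Nat.unpair ((n - 1) / 2)).2).2)⟩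

/-- The arc-less digraph on `n` vertices. -/
def emptyD (n : ℕ) : MDigraph := ⟨Finset.range n, ∅, fun _ => (0, 0)⟩

/-- Disjoint union of two multidigraphs (vertices and arcs relabelled evenly/oddly). -/
noncomputable def disjUnion (D₁ D₂ : MDigraph) : MDigraph :=
  ⟨(D₁.V.image (fun v => 2 * v)) ∪ (D₂.V.image (fun v => 2 * v + 1)),
   (D₁.A.image (fun a => 2 * a)) ∪ (D₂.A.image (fun a => 2 * a + 1)),
   fun n =>
     if n % 2 = 0 then (2 * (D₁.ends (n / 2)).1, 2 * (D₁.ends (n / 2)).2)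
     else (2 * (D₂.ends (n / 2)).1 + 1, 2 * (D₂.ends (n / 2)).2 + 1)⟩

/-- Isomorphism of multidigraphs. -/
def Iso (D₁ D₂ : MDigraph) : Prop :=
  ∃ φ ψ : ℕ → ℕ, Set.BijOn φ ↑D₁.V ↑D₂.V ∧ Set.BijOn ψ ↑D₁.A ↑D₂.A ∧
    ∀ a ∈ D₁.A, D₂.ends (ψ a) = (φ (D₁.ends a).1, φ (D₁.ends a).2)

/-- `C` is (the arc set of) a directed cycle of length `k` in `D`: `k` distinct arcs
forming a closed directed walk through `k` distinct vertices (`k ≥ 1`;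
a loop is a directed cycle of length 1). -/
def IsCycle (D : MDigraph) (C : Finset ℕ) (k : ℕ) : Prop :=
  1 ≤ k ∧ ∃ v a : ℕ → ℕ,
    (∀ i j, i < k → j < k → v i = v j → i = j) ∧
    (∀ i j, i < k → j < k → a i = a j → i = j) ∧
    (∀ i, i < k → a i ∈ D.A ∧ D.ends (a i) = (v i, v ((i + 1) % k))) ∧
    C = (Finset.range k).image a

/-- `P` is (the arc set of) a directed path of length `k` in `D`: `k` distinct arcs
forming a directed walk through `k+1` distinct vertices (`k ≥ 1`). -/
def IsPath (D : MDigraph) (P : Finset ℕ) (k : ℕ) : Prop :=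
  1 ≤ k ∧ ∃ v a : ℕ → ℕ,
    (∀ i j, i ≤ k → j ≤ k → v i = v j → i = j) ∧
    (∀ i j, i < k → j < k → a i = a j → i = j) ∧
    (∀ i, i < k → a i ∈ D.A ∧ D.ends (a i) = (v i, v (i + 1))) ∧
    P = (Finset.range k).image a

/-- Number `c_k(D)` of directed cycles of length `k`. -/
noncomputable def cycCount (D : MDigraph) (k : ℕ) : ℕ :=
  (D.A.powerset.filter (fun C => IsCycle D C k)).card

/-- Number `p_k(D)` of directed paths of length `k`. -/
noncomputable def pathCount (D : MDigraph) (k : ℕ) : ℕ :=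
  (D.A.powerset.filter (fun P => IsPath D P k)).card

/-- The cycle polynomial `σ(D;x) = ∑_k c_k(D) x^k`. -/
noncomputable def cyclePoly (D : MDigraph) : Polynomial ℝ :=
  ∑ k ∈ Finset.range (D.A.card + 1), (cycCount D k : ℝ) • Polynomial.X ^ k

/-- The path polynomial `π(D;x) = ∑_k p_k(D) x^k`. -/
noncomputable def pathPoly (D : MDigraph) : Polynomial ℝ :=
  ∑ k ∈ Finset.range (D.A.card + 1), (pathCount D k : ℝ) • Polynomial.X ^ k


/-- Out-degree of `v`: arcs with tail `v`, counted with multiplicity. -/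
noncomputable def outDeg (D : MDigraph) (v : ℕ) : ℕ :=
  (D.A.filter (fun a => (D.ends a).1 = v)).card

/-- In-degree of `v`: arcs with head `v`, counted with multiplicity. -/
noncomputable def inDeg (D : MDigraph) (v : ℕ) : ℕ :=
  (D.A.filter (fun a => (D.ends a).2 = v)).card

/-- `P` is a directed path of length `k` in `D` beginning at `v0`. -/
def IsPathFrom (D : MDigraph) (v0 : ℕ) (P : Finset ℕ) (k : ℕ) : Prop :=
  1 ≤ k ∧ ∃ v a : ℕ → ℕ, v 0 = v0 ∧
    (∀ i j, i ≤ k → j ≤ k → v i = v j → i = j) ∧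
    (∀ i j, i < k → j < k → a i = a j → i = j) ∧
    (∀ i, i < k → a i ∈ D.A ∧ D.ends (a i) = (v i, v (i + 1))) ∧
    P = (Finset.range k).image a

/-- `P` is a directed path of length `k` in `D` ending at `v0`. -/
def IsPathTo (D : MDigraph) (v0 : ℕ) (P : Finset ℕ) (k : ℕ) : Prop :=
  1 ≤ k ∧ ∃ v a : ℕ → ℕ, v k = v0 ∧
    (∀ i j, i ≤ k → j ≤ k → v i = v j → i = j) ∧
    (∀ i j, i < k → j < k → a i = a j → i = j) ∧
    (∀ i, i < k → a i ∈ D.A ∧ D.ends (a i) = (v i, v (i + 1))) ∧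
    P = (Finset.range k).image a

/-- `p_k(D,v,+)`: number of directed paths of length `k` beginning at `v`. -/
noncomputable def pathFromCount (D : MDigraph) (v : ℕ) (k : ℕ) : ℕ :=
  (D.A.powerset.filter (fun P => IsPathFrom D v P k)).card

/-- `p_k(D,v,−)`: number of directed paths of length `k` ending at `v`. -/
noncomputable def pathToCount (D : MDigraph) (v : ℕ) (k : ℕ) : ℕ :=
  (D.A.powerset.filter (fun P => IsPathTo D v P k)).card

/-- `π_{v+}(D;x) = ∑_k p_k(D,v,+) x^k`. -/
noncomputable def pathFromPoly (D : MDigraph) (v : ℕ) : Polynomial ℝ :=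
  ∑ k ∈ Finset.range (D.A.card + 1), (pathFromCount D v k : ℝ) • Polynomial.X ^ k

/-- `π_{v-}(D;x) = ∑_k p_k(D,v,−) x^k`. -/
noncomputable def pathToPoly (D : MDigraph) (v : ℕ) : Polynomial ℝ :=
  ∑ k ∈ Finset.range (D.A.card + 1), (pathToCount D v k : ℝ) • Polynomial.X ^ k

/-- In the spanning subgraph `D⟨F⟩`, every vertex has out-degree ≤ 1 and
in-degree ≤ 1; equivalently, every component of `D⟨F⟩` is a directed cycle,
a directed path, or an isolated vertex. -/
def DegOK (D : MDigraph) (F : Finset ℕ) : Prop :=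
  ∀ w : ℕ, (F.filter (fun a => (D.ends a).1 = w)).card ≤ 1 ∧
    (F.filter (fun a => (D.ends a).2 = w)).card ≤ 1

/-- `kc(D⟨F⟩)`: the number of components of the spanning subgraph `D⟨F⟩` that are
directed cycles (for degree-constrained `F`, these are exactly the directed
cycles contained in `F`). -/
noncomputable def kcF (D : MDigraph) (F : Finset ℕ) : ℕ :=
  (F.powerset.filter (fun C => ∃ k, IsCycle D C k)).card

/-- `kp(D⟨F⟩)`: the number of components of the spanning subgraph `D⟨F⟩` that are
directed paths with at least one arc (for degree-constrained `F`, counted by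
their initial vertices: vertices that are the tail of an arc of `F` but the
head of no arc of `F`). -/
noncomputable def kpF (D : MDigraph) (F : Finset ℕ) : ℕ :=
  ((F.image (fun a => (D.ends a).1)).filter
    (fun w => (F.filter (fun a => (D.ends a).2 = w)).card = 0)).card

/-- The number of vertices covered by (incident to) the arcs of `F`. -/
noncomputable def coveredCard (D : MDigraph) (F : Finset ℕ) : ℕ :=
  ((F.image (fun a => (D.ends a).1)) ∪ (F.image (fun a => (D.ends a).2))).card

/-- `k(D⟨F⟩)`: total number of connected components of the spanning subgraph
`D⟨F⟩` (isolated vertices included), for degree-constrained `F` in a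
well-formed digraph. -/
noncomputable def kF (D : MDigraph) (F : Finset ℕ) : ℕ :=
  D.V.card - coveredCard D F + kcF D F + kpF D F

/-- `c(D⟨F⟩)`: number of covered components (components with at least one arc). -/
noncomputable def cF (D : MDigraph) (F : Finset ℕ) : ℕ := kcF D F + kpF D F

/-- `c₁(D⟨F⟩)`: number of loops in `F`. -/
noncomputable def loopCount (D : MDigraph) (F : Finset ℕ) : ℕ :=
  (F.filter (fun a => (D.ends a).1 = (D.ends a).2)).card

/-- The bivariate cycle polynomial
`σ̂(D;x,y) = ∑_F x^{|F|} y^{kc(D⟨F⟩)}`, the sum being over all arc subsets `F`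
such that every component of `D⟨F⟩` is a directed cycle or an isolated vertex. -/
noncomputable def biCycPoly (D : MDigraph) : MvPolynomial (Fin 2) ℝ :=
  ∑ F ∈ D.A.powerset.filter (fun F => DegOK D F ∧ kpF D F = 0),
    MvPolynomial.X 0 ^ F.card * MvPolynomial.X 1 ^ kcF D F

/-- The bivariate path polynomial
`π̂(D;x,y) = ∑_F x^{|F|} y^{kp(D⟨F⟩)}`, the sum being over all arc subsets `F`
such that every component of `D⟨F⟩` is a directed path or an isolated vertex. -/
noncomputable def biPathPoly (D : MDigraph) : MvPolynomial (Fin 2) ℝ :=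
  ∑ F ∈ D.A.powerset.filter (fun F => DegOK D F ∧ kcF D F = 0),
    MvPolynomial.X 0 ^ F.card * MvPolynomial.X 1 ^ kpF D F

/-- The trivariate cycle-path polynomial
`σ̂π(D;x,y,z) = ∑_F x^{|F|} y^{kc(D⟨F⟩)} z^{kp(D⟨F⟩)}`, the sum being over all
arc subsets `F` in which every vertex has in- and out-degree at most 1. -/
noncomputable def triPoly (D : MDigraph) : MvPolynomial (Fin 3) ℝ :=
  ∑ F ∈ D.A.powerset.filter (fun F => DegOK D F),
    MvPolynomial.X 0 ^ F.card * MvPolynomial.X 1 ^ kcF D F * MvPolynomial.X 2 ^ kpF D F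

/-- The geometric cover polynomial `C̃(D;x,y) = ∑_{i,j} c_{i,j}(D) x^i y^j`,
where `c_{i,j}(D)` is the number of ways of disjointly covering all vertices of
`D` with `i` directed paths and `j` directed cycles (isolated vertices counting
as paths of length 0): a cover is an arc subset `F` with all in- and out-degrees
at most 1, contributing `j = kc(D⟨F⟩)` cycles and
`i = kp(D⟨F⟩) + (number of uncovered vertices)` paths. -/
noncomputable def geomCover (D : MDigraph) (x y : ℝ) : ℝ :=
  ∑ F ∈ D.A.powerset.filter (fun F => DegOK D F),
    x ^ (kpF D F + (D.V.card - coveredCard D F)) * y ^ kcF D F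

/-- No vertex is incident both to an arc of `A` and to an arc of `B`. -/
def NoCommonVertex (D : MDigraph) (A B : Finset ℕ) : Prop :=
  ∀ a ∈ A, ∀ b ∈ B,
    (D.ends a).1 ≠ (D.ends b).1 ∧ (D.ends a).1 ≠ (D.ends b).2 ∧
    (D.ends a).2 ≠ (D.ends b).1 ∧ (D.ends a).2 ≠ (D.ends b).2

/-- The explicit polynomial
`N(D;x,y,z) = ∑_{(A,B)} x^{k(D⟨A∪B⟩)−c(D⟨B⟩)−c₁(D⟨A⟩)} y^{|A|+|B|−c(D⟨B⟩)} z^{c(D⟨B⟩)}`,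
summing over pairs of disjoint arc subsets `A, B` sharing no vertex such that
every component of `D⟨A∪B⟩` is a directed cycle, a directed path or an isolated
vertex. -/
noncomputable def NPoly (D : MDigraph) : MvPolynomial (Fin 3) ℝ :=
  ∑ p ∈ (D.A.powerset ×ˢ D.A.powerset).filter
      (fun p => Disjoint p.1 p.2 ∧ NoCommonVertex D p.1 p.2 ∧ DegOK D (p.1 ∪ p.2)),
    MvPolynomial.X 0 ^ (kF D (p.1 ∪ p.2) - cF D p.2 - loopCount D p.1) *
      MvPolynomial.X 1 ^ (p.1.card + p.2.card - cF D p.2) *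
      MvPolynomial.X 2 ^ cF D p.2

end MDigraph

/-- A finite undirected graph: a finite vertex set and a finite set of
unordered pairs as edges. -/
structure SGraph where
  V : Finset ℕ
  E : Finset (Sym2 ℕ)

namespace SGraph

/-- `G` is a simple graph: no loops, and all edge endpoints are vertices. -/
def Simple (G : SGraph) : Prop :=
  (∀ s ∈ G.E, ¬ s.IsDiag) ∧ ∀ s ∈ G.E, ∀ a ∈ s, a ∈ G.V

/-- `P` is (the edge set of) an undirected path of length `k` in `G`. -/
def IsUPath (G : SGraph) (P : Finset (Sym2 ℕ)) (k : ℕ) : Prop :=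
  1 ≤ k ∧ ∃ v : ℕ → ℕ,
    (∀ i j, i ≤ k → j ≤ k → v i = v j → i = j) ∧
    (∀ i, i < k → s(v i, v (i + 1)) ∈ G.E) ∧
    P = (Finset.range k).image (fun i => s(v i, v (i + 1)))

/-- `C` is (the edge set of) an undirected cycle of length `k ≥ 3` in `G`. -/
def IsUCycle (G : SGraph) (C : Finset (Sym2 ℕ)) (k : ℕ) : Prop :=
  3 ≤ k ∧ ∃ v : ℕ → ℕ,
    (∀ i j, i < k → j < k → v i = v j → i = j) ∧
    (∀ i, i < k → s(v i, v ((i + 1) % k)) ∈ G.E) ∧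
    C = (Finset.range k).image (fun i => s(v i, v ((i + 1) % k)))

/-- `p_k(G)`: number of undirected paths of length `k` in `G`. -/
noncomputable def uPathCount (G : SGraph) (k : ℕ) : ℕ :=
  (G.E.powerset.filter (fun P => IsUPath G P k)).card

/-- `c_k(G)`: number of undirected cycles of length `k` in `G`. -/
noncomputable def uCycCount (G : SGraph) (k : ℕ) : ℕ :=
  (G.E.powerset.filter (fun C => IsUCycle G C k)).card

/-- `π(G;x) = ∑_k p_k(G) x^k`. -/
noncomputable def uPathPoly (G : SGraph) : Polynomial ℝ :=
  ∑ k ∈ Finset.range (G.E.card + 1), (uPathCount G k : ℝ) • Polynomial.X ^ k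

/-- `σ(G;x) = ∑_k c_k(G) x^k`. -/
noncomputable def uCycPoly (G : SGraph) : Polynomial ℝ :=
  ∑ k ∈ Finset.range (G.E.card + 1), (uCycCount G k : ℝ) • Polynomial.X ^ k

/-- The digraph `D(G)` obtained from `G` by replacing each edge `{u,v}` by the
two oppositely oriented arcs `(u,v)` and `(v,u)`. -/
noncomputable def toDigraph (G : SGraph) : MDigraph :=
  ⟨G.V, ((G.V ×ˢ G.V).filter (fun p => s(p.1, p.2) ∈ G.E)).image (fun p => Nat.pair p.1 p.2),
   Nat.unpair⟩

end SGraph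

/-! Sort the cycles of `D` by the antiparallel arcs they use; a cycle has at most one arc
leaving `u` and at most one leaving `v`. Those using none are the cycles of `D₃`. Those using
both an arc `(u,v)` and an arc `(v,u)` are exactly the `n·m` cycles of length 2. Those using a
single arc `e = (u,v)` and no arc `(v,u)` correspond, on exchanging `e` for the new arc of `D₁`,
to the cycles of `D₁` through the new arc, of which there are `c_k(D₁) − c_k(D₃)`; symmetrically
for `(v,u)` and `D₂`. Hence
`c_k(D) = c_k(D₃) + n (c_k(D₁) − c_k(D₃)) + m (c_k(D₂) − c_k(D₃)) + [k = 2] n m`. -/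

namespace MDigraph

variable {D E E' : MDigraph} {C : Finset ℕ} {k : ℕ}

theorem IsCycle.card_eq (hC : IsCycle D C k) : C.card = k := by
  obtain ⟨-, -, a, -, ha, -, rfl⟩ := hC
  rw [Finset.card_image_of_injOn, Finset.card_range]
  intro i hi j hj hij
  exact ha i j (Finset.mem_range.1 hi) (Finset.mem_range.1 hj) hij

theorem IsCycle.subset_arcs (hC : IsCycle D C k) : C ⊆ D.A := by
  obtain ⟨-, _, a, -, -, harc, rfl⟩ := hC
  intro b hb
  obtain ⟨i, hi, rfl⟩ := Finset.mem_image.1 hb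
  exact (harc i (Finset.mem_range.1 hi)).1

theorem IsCycle.eq_of_fst_ends_eq {b c : ℕ} (hC : IsCycle D C k) (hb : b ∈ C) (hc : c ∈ C)
    (h : (D.ends b).1 = (D.ends c).1) : b = c := by
  obtain ⟨-, w, a, hw, -, harc, rfl⟩ := hC
  obtain ⟨i, hi, rfl⟩ := Finset.mem_image.1 hb
  obtain ⟨j, hj, rfl⟩ := Finset.mem_image.1 hc
  rw [Finset.mem_range] at hi hj
  rw [(harc i hi).2, (harc j hj).2] at h
  rw [hw i j hi hj h]

theorem IsCycle.image {f : ℕ → ℕ} (hC : IsCycle E C k) (hf : Set.InjOn f C)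
    (hmap : ∀ b ∈ C, f b ∈ E'.A ∧ E'.ends (f b) = E.ends b) : IsCycle E' (C.image f) k := by
  obtain ⟨hk, w, a, hw, ha, harc, rfl⟩ := hC
  have hmem : ∀ i < k, a i ∈ (Finset.range k).image a :=
    fun i hi => Finset.mem_image_of_mem a (Finset.mem_range.2 hi)
  refine ⟨hk, w, f ∘ a, hw, fun i j hi hj hij => ha i j hi hj (hf (hmem i hi) (hmem j hj) hij),
    fun i hi => ?_, Finset.image_image⟩
  obtain ⟨hA, hends⟩ := hmap _ (hmem i hi)
  exact ⟨hA, hends.trans (harc i hi).2⟩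

theorem IsCycle.transfer (hC : IsCycle E C k)
    (h : ∀ b ∈ C, b ∈ E'.A ∧ E'.ends b = E.ends b) : IsCycle E' C k := by
  simpa using hC.image (Set.injOn_id _) h

theorem IsCycle.image_swap {e e' : ℕ} (hC : IsCycle E C k) (hA : E.A.erase e = E'.A.erase e')
    (he' : e' ∈ E'.A) (hee : E'.ends e' = E.ends e)
    (hends : ∀ b ∈ E.A.erase e, E'.ends b = E.ends b) :
    IsCycle E' (C.image (Equiv.swap e e')) k := by
  refine hC.image (Equiv.swap e e').injective.injOn fun b hb => ?_
  by_cases hbe : b = e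
  · subst hbe
    rw [Equiv.swap_apply_left]
    exact ⟨he', hee⟩
  · have hb : b ∈ E.A.erase e := Finset.mem_erase.2 ⟨hbe, hC.subset_arcs hb⟩
    have hb' : b ∈ E'.A.erase e' := hA ▸ hb
    rw [Equiv.swap_apply_of_ne_of_ne hbe (Finset.ne_of_mem_erase hb')]
    exact ⟨Finset.mem_of_mem_erase hb', hends b hb⟩

theorem IsCycle.eq_pair_of_antiparallel {u v e g : ℕ} (hC : IsCycle D C k) (huv : u ≠ v)
    (he : e ∈ C) (hg : g ∈ C) (hee : D.ends e = (u, v)) (hge : D.ends g = (v, u)) :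
    k = 2 ∧ C = {e, g} := by
  have hk : k = 2 := by
    obtain ⟨hk, w, a, hw, -, harc, rfl⟩ := hC
    obtain ⟨i, hi, rfl⟩ := Finset.mem_image.1 he
    obtain ⟨j, hj, rfl⟩ := Finset.mem_image.1 hg
    rw [Finset.mem_range] at hi hj
    rw [(harc i hi).2, Prod.mk.injEq] at hee
    rw [(harc j hj).2, Prod.mk.injEq] at hge
    have hk1 : k ≠ 1 := by
      rintro rfl
      obtain rfl : i = j := by omega
      exact huv (hee.1.symm.trans hge.1)
    have hmod : ∀ l, (l + 1) % k < k := fun l => Nat.mod_lt _ hk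
    have hj' : j = (i + 1) % k := hw _ _ hj (hmod i) (hge.1.trans hee.2.symm)
    have hi' : i = (j + 1) % k := hw _ _ hi (hmod j) (hee.1.trans hge.2.symm)
    -- `i` is fixed by two steps around the cycle, so `k ∣ 2`
    rw [hj', Nat.mod_add_mod] at hi'
    rcases Nat.lt_or_ge (i + 1 + 1) k with h | h
    · rw [Nat.mod_eq_of_lt h] at hi'
      omega
    · rw [Nat.mod_eq_sub_mod h, Nat.mod_eq_of_lt (by omega)] at hi'
      omega
  have heg : e ≠ g := by
    rintro rfl
    exact huv (Prod.mk.inj (hee.symm.trans hge)).1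
  refine ⟨hk, (Finset.eq_of_subset_of_card_le ?_ ?_).symm⟩
  · simp [Finset.insert_subset_iff, he, hg]
  · rw [hC.card_eq, hk, Finset.card_pair heg]

theorem isCycle_pair {u v e g : ℕ} (huv : u ≠ v) (heg : e ≠ g) (he : e ∈ D.A) (hg : g ∈ D.A)
    (hee : D.ends e = (u, v)) (hge : D.ends g = (v, u)) : IsCycle D {e, g} 2 := by
  refine ⟨by norm_num, fun i => if i = 0 then u else v, fun i => if i = 0 then e else g,
    ?_, ?_, ?_, ?_⟩
  · intro i j hi hj hij
    interval_cases i <;> interval_cases j <;> simp_all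
  · intro i j hi hj hij
    interval_cases i <;> interval_cases j <;> simp_all
  · intro i hi
    interval_cases i <;> simp [he, hg, hee, hge]
  · simp [Finset.range_add_one, Finset.image_insert, Finset.pair_comm]

noncomputable def cycleSet (D : MDigraph) (k : ℕ) : Finset (Finset ℕ) :=
  D.A.powerset.filter fun C => IsCycle D C k

theorem mem_cycleSet : C ∈ cycleSet D k ↔ IsCycle D C k := by
  rw [cycleSet, Finset.mem_filter, Finset.mem_powerset]
  exact ⟨And.right, fun hC => ⟨hC.subset_arcs, hC⟩⟩

theorem cycCount_eq_card_cycleSet (D : MDigraph) (k : ℕ) : cycCount D k = (cycleSet D k).card :=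
  rfl

theorem cycCount_eq_zero_of_card_lt (h : D.A.card < k) : cycCount D k = 0 := by
  rw [cycCount_eq_card_cycleSet, Finset.card_eq_zero, Finset.eq_empty_iff_forall_notMem]
  intro C hC
  have hC := mem_cycleSet.1 hC
  have := Finset.card_le_card hC.subset_arcs
  rw [hC.card_eq] at this
  omega

theorem coeff_cyclePoly (D : MDigraph) (k : ℕ) : D.cyclePoly.coeff k = cycCount D k := by
  simp only [cyclePoly, Polynomial.finsetSum_coeff, Polynomial.coeff_smul,
    Polynomial.coeff_X_pow, smul_eq_mul, mul_ite, mul_one, mul_zero, Finset.sum_ite_eq,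
    Finset.mem_range]
  split_ifs with hk
  · rfl
  · rw [cycCount_eq_zero_of_card_lt (by omega), Nat.cast_zero]

def freshArc (D : MDigraph) : ℕ := D.A.sup id + 1

theorem freshArc_notMem (D : MDigraph) : D.freshArc ∉ D.A := fun h => by
  have := Finset.le_sup (f := id) h
  simp only [freshArc, id] at this
  omega

theorem addArc_A (D : MDigraph) (p : ℕ × ℕ) : (D.addArc p).A = insert D.freshArc D.A := rfl

theorem addArc_ends_freshArc (D : MDigraph) (p : ℕ × ℕ) : (D.addArc p).ends D.freshArc = p :=
  Function.update_self _ _ _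

theorem addArc_ends_of_ne (D : MDigraph) (p : ℕ × ℕ) {a : ℕ} (ha : a ≠ D.freshArc) :
    (D.addArc p).ends a = D.ends a :=
  Function.update_of_ne ha _ _

theorem cycleSet_filter_notMem_freshArc (D : MDigraph) (p : ℕ × ℕ) (k : ℕ) :
    (cycleSet (D.addArc p) k).filter (D.freshArc ∉ ·) = cycleSet D k := by
  ext C
  rw [Finset.mem_filter, mem_cycleSet, mem_cycleSet]
  constructor
  · rintro ⟨hC, hg⟩
    refine hC.transfer fun b hb => ⟨?_, ?_⟩
    · simpa [addArc_A, ne_of_mem_of_not_mem hb hg] using hC.subset_arcs hb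
    · exact (addArc_ends_of_ne D p (ne_of_mem_of_not_mem hb hg)).symm
  · intro hC
    have hg : D.freshArc ∉ C := fun h => D.freshArc_notMem (hC.subset_arcs h)
    refine ⟨hC.transfer fun b hb => ⟨?_, ?_⟩, hg⟩
    · rw [addArc_A]; exact Finset.mem_insert_of_mem (hC.subset_arcs hb)
    · exact addArc_ends_of_ne D p (ne_of_mem_of_not_mem hb hg)

theorem cycCount_addArc (D : MDigraph) (p : ℕ × ℕ) (k : ℕ) :
    cycCount (D.addArc p) k =
      cycCount D k + ((cycleSet (D.addArc p) k).filter (D.freshArc ∈ ·)).card := by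
  rw [cycCount_eq_card_cycleSet, cycCount_eq_card_cycleSet,
    ← Finset.card_filter_add_card_filter_not (D.freshArc ∈ ·),
    cycleSet_filter_notMem_freshArc, add_comm]

theorem card_cycleSet_filter_mem_eq {e e' : ℕ} (he : e ∈ E.A) (he' : e' ∈ E'.A)
    (hA : E.A.erase e = E'.A.erase e') (hee : E'.ends e' = E.ends e)
    (hends : ∀ b ∈ E.A.erase e, E'.ends b = E.ends b) (k : ℕ) :
    ((cycleSet E k).filter (e ∈ ·)).card = ((cycleSet E' k).filter (e' ∈ ·)).card := by
  have hends' : ∀ b ∈ E'.A.erase e', E.ends b = E'.ends b :=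
    fun b hb => (hends b (hA ▸ hb)).symm
  have hswap : ∀ C : Finset ℕ, (C.image (Equiv.swap e e')).image (Equiv.swap e e') = C := by
    intro C
    simp [Finset.image_image, Function.comp_def]
  refine Finset.card_nbij' (Finset.image (Equiv.swap e e')) (Finset.image (Equiv.swap e e'))
    ?_ ?_ (fun C _ => hswap C) (fun C _ => hswap C)
  · intro C hC
    simp only [Finset.coe_filter, Set.mem_ofPred_eq, mem_cycleSet] at hC ⊢
    exact ⟨hC.1.image_swap hA he' hee hends,
      Finset.mem_image.2 ⟨e, hC.2, Equiv.swap_apply_left _ _⟩⟩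
  · intro C hC
    simp only [Finset.coe_filter, Set.mem_ofPred_eq, mem_cycleSet] at hC ⊢
    rw [Equiv.swap_comm]
    exact ⟨hC.1.image_swap hA.symm he hee.symm hends',
      Finset.mem_image.2 ⟨e', hC.2, Equiv.swap_apply_left _ _⟩⟩

noncomputable def arcsWithEnds (D : MDigraph) (p : ℕ × ℕ) : Finset ℕ :=
  D.A.filter fun a => D.ends a = p

noncomputable def delArcsBetween (D : MDigraph) (u v : ℕ) : MDigraph :=
  ⟨D.V, D.A.filter (fun a => D.ends a ≠ (u, v) ∧ D.ends a ≠ (v, u)), D.ends⟩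

theorem delArcsBetween_comm (D : MDigraph) (u v : ℕ) :
    D.delArcsBetween v u = D.delArcsBetween u v := by
  simp only [delArcsBetween, and_comm]

variable {u v : ℕ}

theorem cycleSet_filter_avoiding (D : MDigraph) (u v k : ℕ) :
    (cycleSet D k).filter (fun C => (¬∃ a ∈ C, D.ends a = (u, v)) ∧ ¬∃ a ∈ C, D.ends a = (v, u))
      = cycleSet (D.delArcsBetween u v) k := by
  ext C
  simp only [Finset.mem_filter, mem_cycleSet, not_exists, not_and]
  constructor
  · rintro ⟨hC, huv, hvu⟩
    exact hC.transfer fun b hb =>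
      ⟨Finset.mem_filter.2 ⟨hC.subset_arcs hb, huv b hb, hvu b hb⟩, rfl⟩
  · intro hC
    have hmem : ∀ b ∈ C, b ∈ D.A ∧ D.ends b ≠ (u, v) ∧ D.ends b ≠ (v, u) :=
      fun b hb => Finset.mem_filter.1 (hC.subset_arcs hb)
    exact ⟨hC.transfer fun b hb => ⟨(hmem b hb).1, rfl⟩,
      fun b hb => (hmem b hb).2.1, fun b hb => (hmem b hb).2.2⟩

/-- A cycle through an arc `e` from `u` to `v` that avoids the arcs from `v` to `u` lives in
`D.delArcsBetween u v` with `e` put back, and `e` can then be exchanged for the fresh arc. -/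
theorem card_cycleSet_filter_mem_avoiding (huv : u ≠ v) {e : ℕ}
    (he : e ∈ arcsWithEnds D (u, v)) (k : ℕ) :
    ((cycleSet D k).filter fun C => e ∈ C ∧ ¬∃ a ∈ C, D.ends a = (v, u)).card =
      ((cycleSet ((D.delArcsBetween u v).addArc (u, v)) k).filter
        ((D.delArcsBetween u v).freshArc ∈ ·)).card := by
  set D₃ := D.delArcsBetween u v
  obtain ⟨heA, hee⟩ := Finset.mem_filter.1 he
  have he₃ : e ∉ D₃.A := fun h => (Finset.mem_filter.1 h).2.1 hee
  let E : MDigraph := ⟨D.V, insert e D₃.A, D.ends⟩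
  have hfilter : ((cycleSet D k).filter fun C => e ∈ C ∧ ¬∃ a ∈ C, D.ends a = (v, u)) =
      (cycleSet E k).filter (e ∈ ·) := by
    ext C
    simp only [Finset.mem_filter, mem_cycleSet]
    constructor
    · rintro ⟨hC, heC, hvu⟩
      refine ⟨hC.transfer fun b hb => ⟨?_, rfl⟩, heC⟩
      by_cases hbe : b = e
      · exact hbe ▸ Finset.mem_insert_self e D₃.A
      · refine Finset.mem_insert_of_mem (Finset.mem_filter.2 ⟨hC.subset_arcs hb, ?_, ?_⟩)
        · exact fun h => hbe (hC.eq_of_fst_ends_eq hb heC (by rw [h, hee]))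
        · exact fun h => hvu ⟨b, hb, h⟩
    · rintro ⟨hC, heC⟩
      have hsub : E.A ⊆ D.A := Finset.insert_subset heA (Finset.filter_subset _ _)
      refine ⟨hC.transfer fun b hb => ⟨hsub (hC.subset_arcs hb), rfl⟩, heC, ?_⟩
      rintro ⟨a, ha, hav⟩
      rcases Finset.mem_insert.1 (hC.subset_arcs ha) with rfl | ha₃
      · exact huv (Prod.mk.inj (hee.symm.trans hav)).1
      · exact (Finset.mem_filter.1 ha₃).2.2 hav
  rw [hfilter]
  refine card_cycleSet_filter_mem_eq (Finset.mem_insert_self e D₃.A) ?_ ?_ ?_ ?_ k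
  · rw [addArc_A]
    exact Finset.mem_insert_self _ _
  · rw [addArc_A, Finset.erase_insert he₃, Finset.erase_insert D₃.freshArc_notMem]
  · rw [addArc_ends_freshArc, hee]
  · intro b hb
    rw [Finset.erase_insert he₃] at hb
    exact addArc_ends_of_ne D₃ _ (ne_of_mem_of_not_mem hb D₃.freshArc_notMem)

theorem card_cycleSet_filter_one_way (huv : u ≠ v) (k : ℕ) :
    ((cycleSet D k).filter fun C =>
        (∃ a ∈ C, D.ends a = (u, v)) ∧ ¬∃ a ∈ C, D.ends a = (v, u)).card =
      (arcsWithEnds D (u, v)).card *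
        ((cycleSet ((D.delArcsBetween u v).addArc (u, v)) k).filter
          ((D.delArcsBetween u v).freshArc ∈ ·)).card := by
  have hunion : ((cycleSet D k).filter fun C =>
        (∃ a ∈ C, D.ends a = (u, v)) ∧ ¬∃ a ∈ C, D.ends a = (v, u)) =
      (arcsWithEnds D (u, v)).biUnion fun e =>
        (cycleSet D k).filter fun C => e ∈ C ∧ ¬∃ a ∈ C, D.ends a = (v, u) := by
    ext C
    simp only [Finset.mem_filter, Finset.mem_biUnion, arcsWithEnds]
    constructor
    · rintro ⟨hC, ⟨e, heC, hee⟩, hvu⟩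
      exact ⟨e, ⟨(mem_cycleSet.1 hC).subset_arcs heC, hee⟩, hC, heC, hvu⟩
    · rintro ⟨e, ⟨-, hee⟩, hC, heC, hvu⟩
      exact ⟨hC, ⟨e, heC, hee⟩, hvu⟩
  -- a cycle has only one arc leaving `u`
  have hdisj : (arcsWithEnds D (u, v) : Set ℕ).PairwiseDisjoint fun e =>
      (cycleSet D k).filter fun C => e ∈ C ∧ ¬∃ a ∈ C, D.ends a = (v, u) := by
    intro e he e' he' hne
    refine Finset.disjoint_left.2 fun C hC hC' => hne ?_
    obtain ⟨hC, heC, -⟩ := Finset.mem_filter.1 hC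
    obtain ⟨-, he'C, -⟩ := Finset.mem_filter.1 hC'
    refine (mem_cycleSet.1 hC).eq_of_fst_ends_eq heC he'C ?_
    rw [(Finset.mem_filter.1 he).2, (Finset.mem_filter.1 he').2]
  rw [hunion, Finset.card_biUnion hdisj,
    Finset.sum_congr rfl fun e he => card_cycleSet_filter_mem_avoiding huv he k,
    Finset.sum_const, smul_eq_mul]

theorem card_cycleSet_filter_both_ways (huv : u ≠ v) (k : ℕ) :
    ((cycleSet D k).filter fun C =>
        (∃ a ∈ C, D.ends a = (u, v)) ∧ ∃ a ∈ C, D.ends a = (v, u)).card =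
      if k = 2 then (arcsWithEnds D (u, v)).card * (arcsWithEnds D (v, u)).card else 0 := by
  have hne : ∀ {e g}, D.ends e = (u, v) → D.ends g = (v, u) → e ≠ g := by
    rintro e g hee hge rfl
    exact huv (Prod.mk.inj (hee.symm.trans hge)).1
  split_ifs with hk
  · subst hk
    have himage : ((cycleSet D 2).filter fun C =>
          (∃ a ∈ C, D.ends a = (u, v)) ∧ ∃ a ∈ C, D.ends a = (v, u)) =
        (arcsWithEnds D (u, v) ×ˢ arcsWithEnds D (v, u)).image fun p => {p.1, p.2} := by
      ext C
      simp only [Finset.mem_filter, Finset.mem_image, Finset.mem_product, mem_cycleSet,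
        arcsWithEnds, Prod.exists]
      constructor
      · rintro ⟨hC, ⟨e, heC, hee⟩, g, hgC, hge⟩
        exact ⟨e, g, ⟨⟨hC.subset_arcs heC, hee⟩, hC.subset_arcs hgC, hge⟩,
          (hC.eq_pair_of_antiparallel huv heC hgC hee hge).2.symm⟩
      · rintro ⟨e, g, ⟨⟨heA, hee⟩, hgA, hge⟩, rfl⟩
        exact ⟨isCycle_pair huv (hne hee hge) heA hgA hee hge,
          ⟨e, by simp, hee⟩, g, by simp, hge⟩
    rw [himage, Finset.card_image_of_injOn, Finset.card_product]
    rintro ⟨e, g⟩ hp ⟨e', g'⟩ hp' heq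
    simp only [Finset.coe_product, Set.mem_prod, Finset.mem_coe, arcsWithEnds,
      Finset.mem_filter] at hp hp'
    dsimp only at heq
    have he : e ∈ ({e', g'} : Finset ℕ) := heq ▸ Finset.mem_insert_self e {g}
    have hg : g ∈ ({e', g'} : Finset ℕ) :=
      heq ▸ Finset.mem_insert_of_mem (Finset.mem_singleton_self g)
    rw [Finset.mem_insert, Finset.mem_singleton] at he hg
    rw [he.resolve_right (hne hp.1.2 hp'.2.2),
      hg.resolve_left fun h => hne hp'.1.2 hp.2.2 h.symm]
  · rw [Finset.card_eq_zero, Finset.filter_eq_empty_iff]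
    rintro C hC ⟨⟨e, heC, hee⟩, g, hgC, hge⟩
    exact hk ((mem_cycleSet.1 hC).eq_pair_of_antiparallel huv heC hgC hee hge).1

theorem cycCount_eq_of_antiparallel (huv : u ≠ v) (k : ℕ) :
    cycCount D k = cycCount (D.delArcsBetween u v) k
      + (arcsWithEnds D (u, v)).card *
          ((cycleSet ((D.delArcsBetween u v).addArc (u, v)) k).filter
            ((D.delArcsBetween u v).freshArc ∈ ·)).card
      + (arcsWithEnds D (v, u)).card *
          ((cycleSet ((D.delArcsBetween u v).addArc (v, u)) k).filter
            ((D.delArcsBetween u v).freshArc ∈ ·)).card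
      + if k = 2 then (arcsWithEnds D (u, v)).card * (arcsWithEnds D (v, u)).card else 0 := by
  set P : Finset ℕ → Prop := fun C => ∃ a ∈ C, D.ends a = (u, v)
  set Q : Finset ℕ → Prop := fun C => ∃ a ∈ C, D.ends a = (v, u)
  have hsplit : cycCount D k = ((cycleSet D k).filter fun C => ¬P C ∧ ¬Q C).card
      + ((cycleSet D k).filter fun C => P C ∧ ¬Q C).card
      + ((cycleSet D k).filter fun C => Q C ∧ ¬P C).card
      + ((cycleSet D k).filter fun C => P C ∧ Q C).card := by
    rw [cycCount_eq_card_cycleSet, ← Finset.card_filter_add_card_filter_not P,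
      ← Finset.card_filter_add_card_filter_not (s := (cycleSet D k).filter P) Q,
      ← Finset.card_filter_add_card_filter_not (s := (cycleSet D k).filter (¬P ·)) Q]
    simp only [Finset.filter_filter, and_comm (a := ¬P _)]
    omega
  rw [hsplit, cycleSet_filter_avoiding, card_cycleSet_filter_one_way huv,
    card_cycleSet_filter_one_way huv.symm, delArcsBetween_comm D u v,
    card_cycleSet_filter_both_ways huv, cycCount_eq_card_cycleSet]

end MDigraph

theorem cyclePoly_parallel_reduction_general (D : MDigraph)
    (u v : ℕ) (huv : u ≠ v) (n m : ℕ)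
    (hn : (D.A.filter (fun a => D.ends a = (u, v))).card = n)
    (hm : (D.A.filter (fun a => D.ends a = (v, u))).card = m)
    (D₃ : MDigraph)
    (hD₃ : D₃ = ⟨D.V, D.A.filter (fun a => D.ends a ≠ (u, v) ∧ D.ends a ≠ (v, u)), D.ends⟩) :
    D.cyclePoly = (n : ℝ) • (D₃.addArc (u, v)).cyclePoly + (m : ℝ) • (D₃.addArc (v, u)).cyclePoly
      - ((n : ℝ) + (m : ℝ) - 1) • D₃.cyclePoly + ((n * m : ℕ) : ℝ) • Polynomial.X ^ 2 := by
  obtain rfl : D₃ = D.delArcsBetween u v := hD₃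
  ext k
  simp only [Polynomial.coeff_add, Polynomial.coeff_sub, Polynomial.coeff_smul,
    Polynomial.coeff_X_pow, MDigraph.coeff_cyclePoly, smul_eq_mul]
  rw [MDigraph.cycCount_eq_of_antiparallel huv k, MDigraph.cycCount_addArc,
    MDigraph.cycCount_addArc, MDigraph.arcsWithEnds, MDigraph.arcsWithEnds, hn, hm]
  split_ifs <;> push_cast <;> ring

/-- if the arc `(u,v)` has multiplicity `n` and the arc `(v,u)` has
multiplicity `m` in `D` (`u ≠ v`), `D₃` is `D` with all these arcs deleted,
`D₁ = D₃ + (u,v)` and `D₂ = D₃ + (v,u)`, then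
`σ(D;x) = n·σ(D₁;x) + m·σ(D₂;x) − (n+m−1)·σ(D₃;x) + n·m·x²`. -/
theorem cyclePoly_parallel_reduction (D : MDigraph) (hwf : D.WellFormed)
    (u v : ℕ) (hu : u ∈ D.V) (hv : v ∈ D.V) (huv : u ≠ v) (n m : ℕ)
    (hn : (D.A.filter (fun a => D.ends a = (u, v))).card = n)
    (hm : (D.A.filter (fun a => D.ends a = (v, u))).card = m)
    (D₃ : MDigraph)
    (hD₃ : D₃ = ⟨D.V, D.A.filter (fun a => D.ends a ≠ (u, v) ∧ D.ends a ≠ (v, u)), D.ends⟩) :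
    D.cyclePoly = (n : ℝ) • (D₃.addArc (u, v)).cyclePoly + (m : ℝ) • (D₃.addArc (v, u)).cyclePoly
      - ((n : ℝ) + (m : ℝ) - 1) • D₃.cyclePoly + ((n * m : ℕ) : ℝ) • Polynomial.X ^ 2 :=
  cyclePoly_parallel_reduction_general D u v huv n m hn hm D₃ hD₃
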